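/- Fix a proper linear subspace L of ℙ^m, an integer d ≥ 2 and a finite set E ⊂ ℙ^m ∖ L with #E ≤ d. Then: (i) dim⟨ν_d(E ∪ L)⟩ = dim⟨ν_d(L)⟩ + #E; (ii) for every closed subscheme U ⊆ L one has ⟨ν_d(U ∪ E)⟩ ∩ ⟨ν_d(L)⟩ = ⟨ν_d(U)⟩; (iii) for every O ∈ ⟨ν_d(L ∪ E)⟩ ∖ ⟨ν_d(E)⟩, the set ⟨{O} ∪ ν_d(E)⟩ ∩ ⟨ν_d(L)⟩ is a single point. -/

import Mathlib

open scoped LinearAlgebra.Projectivization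

noncomputable section

/-- The polynomial ring in `m+1` variables over `K`: homogeneous coordinate ring of `ℙ^m`. -/
abbrev PR (K : Type) [Field K] (m : ℕ) : Type := MvPolynomial (Fin (m+1)) K

/-- The space of degree-`d` forms in `m+1` variables. -/
abbrev Hd (K : Type) [Field K] (m d : ℕ) : Submodule K (PR K m) :=
  MvPolynomial.homogeneousSubmodule (Fin (m+1)) K d

/-- Projective `m`-space over `K`. -/
abbrev Pm (K : Type) [Field K] (m : ℕ) := ℙ K (Fin (m+1) → K)

/-- The target projective space `ℙ^n`, `n = C(m+d,m) - 1`, of the degree-`d` Veronese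
embedding, realized as the projectivization of the dual of the space of degree-`d` forms
(the space of degree-`d` symmetric tensors). -/
abbrev PN (K : Type) [Field K] (m d : ℕ) := ℙ K (Module.Dual K (Hd K m d))

variable {K : Type} [Field K] {m : ℕ}

/-- Hilbert function of `R/I` in degree `t`. -/
def hilbQ (I : Ideal (PR K m)) (t : ℕ) : ℕ :=
  Module.finrank K ((Hd K m t).map (Ideal.Quotient.mkₐ K I).toLinearMap)

/-- The degree (length) of the projective scheme defined by `I`: the eventual value of the
Hilbert function of `R/I`. -/
def idealDeg (I : Ideal (PR K m)) : ℕ := Filter.limsup (fun t => hilbQ I t) Filter.atTop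

/-- `h^1(𝓘_Z(d))` for the zero-dimensional scheme `Z` with (saturated) ideal `I`:
it equals `deg Z - dim (R/I)_d`. -/
def h1I (I : Ideal (PR K m)) (d : ℕ) : ℕ := idealDeg I - hilbQ I d

/-- An ideal is homogeneous. -/
def IsHomogI (I : Ideal (PR K m)) : Prop :=
  ∀ f ∈ I, ∀ n : ℕ, MvPolynomial.homogeneousComponent n f ∈ I

/-- An ideal is saturated with respect to the irrelevant maximal ideal. -/
def IsSatI (I : Ideal (PR K m)) : Prop :=
  ∀ f : PR K m, (∀ i, MvPolynomial.X i * f ∈ I) → f ∈ I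

/-- A closed subscheme of `ℙ^m`, given by its saturated homogeneous ideal. -/
structure PSub (K : Type) [Field K] (m : ℕ) where
  I : Ideal (PR K m)
  homog : IsHomogI I
  sat : IsSatI I

/-- A (closed sub)scheme is zero-dimensional iff the Hilbert function of `R/I` is bounded. -/
def IsZeroDimI (I : Ideal (PR K m)) : Prop := ∃ C, ∀ t, hilbQ I t ≤ C

/-- A polynomial vanishes at a projective point (every homogeneous component vanishes
at a representative). -/
def vanishesAt (f : PR K m) (a : Pm K m) : Prop :=
  ∀ n : ℕ, MvPolynomial.eval a.rep (MvPolynomial.homogeneousComponent n f) = 0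

/-- Zero locus of an ideal in `ℙ^m`. -/
def pzeroLocus (I : Ideal (PR K m)) : Set (Pm K m) := {a | ∀ f ∈ I, vanishesAt f a}

/-- The (saturated) homogeneous ideal of a set of points of `ℙ^m`. -/
def idealOfSet (S : Set (Pm K m)) : Ideal (PR K m) :=
  Ideal.span {f : PR K m | (∃ n, f.IsHomogeneous n) ∧ ∀ a ∈ S, MvPolynomial.eval a.rep f = 0}

/-- Saturation of a homogeneous ideal: the smallest saturated homogeneous ideal containing it. -/
def satIdeal (J : Ideal (PR K m)) : Ideal (PR K m) := sInf {J' | J ≤ J' ∧ IsHomogI J' ∧ IsSatI J'}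

/-- The scheme defined by the (saturated) ideal `I` is reduced. -/
def IsReducedI (I : Ideal (PR K m)) : Prop := I = idealOfSet (pzeroLocus I)

/-- Connected component of a zero-dimensional scheme at a point `a`: the largest subscheme
supported at `a`, i.e. the `a`-primary component. -/
def componentAt (I : Ideal (PR K m)) (a : Pm K m) : Ideal (PR K m) :=
  sInf {J | I ≤ J ∧ IsHomogI J ∧ IsSatI J ∧ pzeroLocus J ⊆ {a}}

/-- Residual scheme of `Z` with respect to the hypersurface `f = 0`: the colon ideal `(I_Z : f)`. -/
def resIdeal (I : Ideal (PR K m)) (f : PR K m) : Ideal (PR K m) :=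
  Submodule.colon I (Ideal.span {f})

/-- Degree of the scheme-theoretic intersection of the subschemes defined by `I` and `J`. -/
def interDeg (I J : Ideal (PR K m)) : ℕ := idealDeg (I ⊔ J)

/-- The degree-`d` Veronese image of a vector `v`: the evaluation-at-`v` functional on
degree-`d` forms. -/
def nu (d : ℕ) (v : Fin (m+1) → K) : Module.Dual K (Hd K m d) :=
  (MvPolynomial.aeval v).toLinearMap ∘ₗ (Hd K m d).subtype

/-- The linear span of the Veronese image `ν_d(S)` of a set `S` of points of `ℙ^m`. -/
def dualSpan (d : ℕ) (S : Set (Pm K m)) : Submodule K (Module.Dual K (Hd K m d)) :=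
  Submodule.span K ((fun a => nu d a.rep) '' S)

/-- The linear span `⟨ν_d(Z)⟩` of the Veronese image of the subscheme with ideal `I`:
the annihilator of the degree-`d` part of `I`. -/
def schemeSpanSub (I : Ideal (PR K m)) (d : ℕ) : Submodule K (Module.Dual K (Hd K m d)) where
  carrier := {φ | ∀ f : Hd K m d, (f : PR K m) ∈ I → φ f = 0}
  add_mem' := by
    intro a b ha hb f hf
    simp [LinearMap.add_apply, ha f hf, hb f hf]
  zero_mem' := by intro f hf; simp
  smul_mem' := by
    intro c a ha f hf
    simp [LinearMap.smul_apply, ha f hf]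

/-- `P ∈ ⟨ν_d(Z)⟩`, for `Z` the subscheme with ideal `I`. -/
def inSpanI (I : Ideal (PR K m)) (d : ℕ) (P : PN K m d) : Prop := P.rep ∈ schemeSpanSub I d

/-- `P ∈ ⟨ν_d(S)⟩` for a set `S` of points of `ℙ^m`. -/
def inSpanSet (d : ℕ) (S : Set (Pm K m)) (P : PN K m d) : Prop := P.rep ∈ dualSpan d S

/-- `L` is a linear subspace of `ℙ^m`. -/
def IsLinearSub (L : Set (Pm K m)) : Prop :=
  ∃ W : Submodule K (Fin (m+1) → K), L = {a | a.submodule ≤ W}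

/-- `L` is a line of `ℙ^m`. -/
def IsLine (L : Set (Pm K m)) : Prop :=
  ∃ W : Submodule K (Fin (m+1) → K), Module.finrank K W = 2 ∧ L = {a | a.submodule ≤ W}

/-- `L` is a plane of `ℙ^m`. -/
def IsPlane (L : Set (Pm K m)) : Prop :=
  ∃ W : Submodule K (Fin (m+1) → K), Module.finrank K W = 3 ∧ L = {a | a.submodule ≤ W}

/-- `J` is the (saturated homogeneous) ideal of a conic of `ℙ^m`: a degree-2 curve contained
in a plane (possibly reducible). -/
def IsConic (J : Ideal (PR K m)) : Prop :=
  ∃ (W : Submodule K (Fin (m+1) → K)) (q : PR K m),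
    Module.finrank K W = 3 ∧ q.IsHomogeneous 2 ∧
    q ∉ idealOfSet {a : Pm K m | a.submodule ≤ W} ∧
    J = satIdeal (idealOfSet {a : Pm K m | a.submodule ≤ W} ⊔ Ideal.span {q})

/-- The algebra of polynomial functions on a `K`-vector space. -/
def polyFunctions (K V : Type) [Field K] [AddCommGroup V] [Module K V] : Subalgebra K (V → K) :=
  Algebra.adjoin K {g : V → K | ∃ φ : V →ₗ[K] K, g = ⇑φ}

/-- Zariski closure of a subset of a projective space. -/
def zClosure {V : Type} [AddCommGroup V] [Module K V] (T : Set (ℙ K V)) : Set (ℙ K V) :=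
  {P | ∀ F ∈ polyFunctions K V, (∀ Q ∈ T, ∀ c : K, F (c • Q.rep) = 0) →
    ∀ c : K, F (c • P.rep) = 0}

/-- The Veronese variety `X_{m,d} = ν_d(ℙ^m)` as a subset of `PN K m d`. -/
def XSet (K : Type) [Field K] (m d : ℕ) : Set (PN K m d) :=
  {Q | ∃ a : Pm K m, Q.submodule = Submodule.span K {nu d a.rep}}

/-- The image `ν_d(S)` of a set of points of `ℙ^m`, as a subset of `PN K m d`. -/
def nuSet (d : ℕ) (S : Set (Pm K m)) : Set (PN K m d) :=
  {Q | ∃ a ∈ S, Q.submodule = Submodule.span K {nu d a.rep}}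

/-- The rank of a point `P` of `PN` with respect to a subset `Y ⊆ PN`. -/
def rankWrt {m d : ℕ} (Y : Set (PN K m d)) (P : PN K m d) : ℕ :=
  sInf {r | ∃ S : Finset (PN K m d), ↑S ⊆ Y ∧ S.card = r ∧
    P.rep ∈ Submodule.span K (Projectivization.rep '' (S : Set (PN K m d)))}

/-- The `s`-th secant variety of `Y ⊆ PN`: the Zariski closure of the union of the spans
of `s` points of `Y`. -/
def secantWrt {m d : ℕ} (Y : Set (PN K m d)) (s : ℕ) : Set (PN K m d) :=
  zClosure {Q | ∃ S : Finset (PN K m d), ↑S ⊆ Y ∧ S.card ≤ s ∧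
    Q.rep ∈ Submodule.span K (Projectivization.rep '' (S : Set (PN K m d)))}

/-- The border rank of `P` with respect to `Y ⊆ PN`. -/
def brankWrt {m d : ℕ} (Y : Set (PN K m d)) (P : PN K m d) : ℕ :=
  sInf {s | 0 < s ∧ P ∈ secantWrt Y s}

/-- Symmetric rank. -/
def srank {m : ℕ} (d : ℕ) (P : PN K m d) : ℕ := rankWrt (XSet K m d) P

/-- Border rank. -/
def brank {m : ℕ} (d : ℕ) (P : PN K m d) : ℕ := brankWrt (XSet K m d) P

/-- Cactus rank: minimal degree of a zero-dimensional closed subscheme `E ⊂ ℙ^m` with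
`P ∈ ⟨ν_d(E)⟩`. -/
def crank {m : ℕ} (d : ℕ) (P : PN K m d) : ℕ :=
  sInf {c | ∃ Z : PSub K m, IsZeroDimI Z.I ∧ idealDeg Z.I = c ∧ inSpanI Z.I d P}

/-- `σ_{s,r}(X_{m,d})`. -/
def sigmaSet (K : Type) [Field K] (m d s r : ℕ) : Set (PN K m d) :=
  {P | brank d P = s ∧ srank d P = r}

/-- A property `Φ` holds for a general `k`-tuple of points of the linear subspace of `ℙ^m`
determined by `W`. -/
def GenerallyOn (W : Submodule K (Fin (m+1) → K)) (k : ℕ)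
    (Φ : (Fin k → Pm K m) → Prop) : Prop :=
  ∃ w : Fin 3 → W, Submodule.span K (Set.range fun j => (w j : Fin (m+1) → K)) = W ∧
    ∃ F : MvPolynomial (Fin k × Fin 3) K, F ≠ 0 ∧
      ∀ c : Fin k → Fin 3 → K,
        MvPolynomial.eval (fun p => c p.1 p.2) F ≠ 0 →
        ∀ e : Fin k → Pm K m,
          (∀ i, (e i).submodule = Submodule.span K {∑ j, c i j • (w j : Fin (m+1) → K)}) → Φ e

end

/-!
Let `W` be the subspace with `L = ℙ(W)`. Since `#E ≤ d`, for every `a ∈ E` some product of `d`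
linear forms vanishes on `W` and on `E ∖ {a}` but not at `a`: one form vanishing on `W`, one for
each other point of `E`, and a power of a form not vanishing at `a`. So degree-`d` forms vanishing
on `L` take arbitrary values on `E`, which makes `ν_d(E)` linearly independent modulo `⟨ν_d(L)⟩`.
Then (i) is a dimension count; (ii) follows by correcting a form of `I_U` by such an interpolating
form, so that the difference lies in `I_U ∩ I_E`; and (iii) holds because for subspaces `A ∩ B = 0`
and `O = a + b ∈ A ⊕ B` with `b ≠ 0`, one has `(⟨O⟩ + A) ∩ B = ⟨b⟩`.
-/

open MvPolynomial

section Projective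

variable {K V : Type*} [Field K] [AddCommGroup V] [Module K V]

lemma Submodule.span_singleton_add_sup_inf_of_disjoint {A B : Submodule K V} (hAB : Disjoint A B)
    {a b : V} (ha : a ∈ A) (hb : b ∈ B) : (K ∙ (a + b) ⊔ A) ⊓ B = K ∙ b := by
  have hsup : K ∙ (a + b) ⊔ A = K ∙ b ⊔ A := by
    refine le_antisymm (sup_le ?_ le_sup_right) (sup_le ?_ le_sup_right) <;>
      rw [Submodule.span_singleton_le_iff_mem]
    · exact add_comm a b ▸ Submodule.add_mem_sup (Submodule.mem_span_singleton_self b) ha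
    · simpa using Submodule.sub_mem_sup (Submodule.mem_span_singleton_self (a + b)) ha
  rw [hsup, sup_inf_assoc_of_le _ ((Submodule.span_singleton_le_iff_mem _ _).mpr hb),
    hAB.eq_bot, sup_bot_eq]

lemma Projectivization.submodule_le_iff_rep_mem {a : ℙ K V} {W : Submodule K V} :
    a.submodule ≤ W ↔ a.rep ∈ W := by
  rw [submodule_eq, Submodule.span_singleton_le_iff_mem]

lemma Projectivization.existsUnique_rep_mem_span_singleton {v : V} (hv : v ≠ 0) :
    ∃! Q : ℙ K V, Q.rep ∈ K ∙ v := by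
  refine ⟨mk K v hv, ?_, fun Q hQ => ?_⟩
  · obtain ⟨c, hc⟩ := exists_smul_eq_mk_rep K v hv
    exact hc ▸ Submodule.smul_of_tower_mem _ c (Submodule.mem_span_singleton_self v)
  · obtain ⟨c, hc⟩ := Submodule.mem_span_singleton.mp hQ
    rw [← mk_rep Q]
    exact (mk_eq_mk_iff' K _ _ Q.rep_nonzero hv).mpr ⟨c, hc⟩

lemma Projectivization.existsUnique_rep_mem_span_singleton_sup_inf {A B : Submodule K V}
    (hAB : Disjoint A B) {v : V} (hv : v ∈ A ⊔ B) (hvA : v ∉ A) :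
    ∃! Q : ℙ K V, Q.rep ∈ K ∙ v ⊔ A ∧ Q.rep ∈ B := by
  obtain ⟨a, ha, b, hb, rfl⟩ := Submodule.mem_sup.mp hv
  have hb0 : b ≠ 0 := by
    rintro rfl
    exact hvA (by simpa using ha)
  simpa only [← Submodule.mem_inf, Submodule.span_singleton_add_sup_inf_of_disjoint hAB ha hb]
    using existsUnique_rep_mem_span_singleton hb0

end Projective

section

variable {K : Type} [Field K] {m : ℕ}

instance (d : ℕ) : FiniteDimensional K (Hd K m d) :=
  Submodule.finiteDimensional_of_le (S₂ := restrictTotalDegree (Fin (m+1)) K d)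
    fun f hf => (mem_restrictTotalDegree _ _ f).mpr
      ((mem_homogeneousSubmodule _ _).mp hf).totalDegree_le

lemma nu_apply (d : ℕ) (v : Fin (m+1) → K) (f : Hd K m d) :
    nu d v f = eval v (f : PR K m) := by
  simp [nu]

lemma eval_coe_sum_smul {d : ℕ} {ι : Type*} (s : Finset ι) (c : ι → K) (F : ι → Hd K m d)
    (v : Fin (m+1) → K) :
    eval v ((∑ i ∈ s, c i • F i : Hd K m d) : PR K m) = ∑ i ∈ s, c i * eval v (F i : PR K m) := by
  simp [smul_eval]

lemma exists_linearForm_of_notMem {V : Submodule K (Fin (m+1) → K)} {v : Fin (m+1) → K}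
    (hv : v ∉ V) :
    ∃ p : PR K m, p.IsHomogeneous 1 ∧ (∀ w ∈ V, eval w p = 0) ∧ eval v p ≠ 0 := by
  obtain ⟨φ, hφv, hφV⟩ := V.exists_dual_map_eq_bot_of_notMem hv inferInstance
  set p : PR K m := ∑ i, C (φ fun j => if i = j then 1 else 0) * X i
  have heval : ∀ u, eval u p = φ u := fun u => by
    simp [p, φ.pi_apply_eq_sum_univ u, mul_comm]
  refine ⟨p, IsHomogeneous.sum _ _ _ fun i _ => isHomogeneous_C_mul_X _ i, fun w hw => ?_, ?_⟩
  · rw [heval, ← Submodule.mem_bot K, ← hφV]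
    exact Submodule.mem_map_of_mem hw
  · rwa [heval]

lemma exists_form_vanishing_on_subspaces {d : ℕ} (s : Finset (Submodule K (Fin (m+1) → K)))
    (hs : s.card ≤ d) {v : Fin (m+1) → K} (hv0 : v ≠ 0) (hv : ∀ V ∈ s, v ∉ V) :
    ∃ f : Hd K m d, (∀ V ∈ s, ∀ w ∈ V, eval w (f : PR K m) = 0) ∧ eval v (f : PR K m) ≠ 0 := by
  choose! p hp_hom hp_zero hp_ne using fun V (hV : V ∈ s) => exists_linearForm_of_notMem (hv V hV)
  obtain ⟨q, hq_hom, -, hq_ne⟩ :=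
    exists_linearForm_of_notMem (V := ⊥) (m := m) (by simpa using hv0)
  have hhom : ((∏ V ∈ s, p V) * q ^ (d - s.card)).IsHomogeneous d := by
    convert (IsHomogeneous.prod _ _ _ hp_hom).mul (hq_hom.pow (d - s.card)) using 1
    rw [Finset.sum_const, smul_eq_mul]
    omega
  refine ⟨⟨_, (mem_homogeneousSubmodule _ _).mpr hhom⟩, fun V hV w hw => ?_, ?_⟩
  · simp only [map_mul, map_prod, map_pow]
    rw [Finset.prod_eq_zero hV (hp_zero V hV w hw), zero_mul]
  · simp only [map_mul, map_prod, map_pow]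
    exact mul_ne_zero (Finset.prod_ne_zero_iff.mpr hp_ne) (pow_ne_zero _ hq_ne)

lemma exists_form_separating {d : ℕ} {W : Submodule K (Fin (m+1) → K)} {E : Finset (Pm K m)}
    (hE : E.card ≤ d) (hEW : ∀ a ∈ E, a.rep ∉ W) {a : Pm K m} (ha : a ∈ E) :
    ∃ f : Hd K m d, (∀ w ∈ W, eval w (f : PR K m) = 0) ∧
      (∀ b ∈ E, b ≠ a → eval b.rep (f : PR K m) = 0) ∧ eval a.rep (f : PR K m) ≠ 0 := by
  classical
  have hcard : (insert W ((E.erase a).image fun b => K ∙ b.rep)).card ≤ d := by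
    grw [Finset.card_insert_le, Finset.card_image_le, Finset.card_erase_of_mem ha]
    have := Finset.card_pos.mpr ⟨a, ha⟩
    omega
  have hnotMem : ∀ b : Pm K m, b ≠ a → a.rep ∉ K ∙ b.rep := fun b hba hab => by
    obtain ⟨c, hc⟩ := Submodule.mem_span_singleton.mp hab
    refine hba (Eq.symm ?_)
    rw [← Projectivization.mk_rep a, ← Projectivization.mk_rep b]
    exact (Projectivization.mk_eq_mk_iff' K _ _ a.rep_nonzero b.rep_nonzero).mpr ⟨c, hc⟩
  obtain ⟨f, hf_zero, hf_ne⟩ := exists_form_vanishing_on_subspaces _ hcard a.rep_nonzero (by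
    simp only [Finset.mem_insert, Finset.mem_image, Finset.mem_erase]
    rintro V (rfl | ⟨b, ⟨hba, -⟩, rfl⟩)
    exacts [hEW a ha, hnotMem b hba])
  refine ⟨f, hf_zero W (Finset.mem_insert_self _ _), fun b hb hba => ?_, hf_ne⟩
  exact hf_zero _ (Finset.mem_insert_of_mem (Finset.mem_image_of_mem _ (Finset.mem_erase.mpr
    ⟨hba, hb⟩))) _ (Submodule.mem_span_singleton_self _)

lemma exists_form_interpolating {d : ℕ} {W : Submodule K (Fin (m+1) → K)} {E : Finset (Pm K m)}
    (hE : E.card ≤ d) (hEW : ∀ a ∈ E, a.rep ∉ W) (g : Pm K m → K) :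
    ∃ h : Hd K m d,
      (∀ w ∈ W, eval w (h : PR K m) = 0) ∧ ∀ a ∈ E, eval a.rep (h : PR K m) = g a := by
  choose! F hF_zero hF_sep hF_ne using fun a (ha : a ∈ E) => exists_form_separating hE hEW ha
  refine ⟨∑ a ∈ E, (g a / eval a.rep (F a : PR K m)) • F a, fun w hw => ?_, fun b hb => ?_⟩
  · rw [eval_coe_sum_smul]
    exact Finset.sum_eq_zero fun a ha => by rw [hF_zero a ha w hw, mul_zero]
  · rw [eval_coe_sum_smul, Finset.sum_eq_single b
      (fun a ha hab => by rw [hF_sep a ha b hb hab.symm, mul_zero]) (fun hb' => absurd hb hb'),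
      div_mul_cancel₀ _ (hF_ne b hb)]

lemma dualSpan_union (d : ℕ) (S T : Set (Pm K m)) :
    dualSpan d (S ∪ T) = dualSpan d S ⊔ dualSpan d T := by
  rw [dualSpan, Set.image_union, Submodule.span_union]
  rfl

lemma apply_eq_zero_of_mem_dualSpan {d : ℕ} {S : Set (Pm K m)} {f : Hd K m d}
    (hf : ∀ x ∈ S, eval x.rep (f : PR K m) = 0) {ψ : Module.Dual K (Hd K m d)}
    (hψ : ψ ∈ dualSpan d S) : ψ f = 0 := by
  refine (Submodule.span_le (p := LinearMap.ker (Module.Dual.eval K _ f))).mpr ?_ hψ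
  rintro _ ⟨x, hx, rfl⟩
  simpa [nu_apply] using hf x hx

lemma mem_idealOfSet_of_forall_eval_eq_zero {d : ℕ} {S : Set (Pm K m)} (f : Hd K m d)
    (hf : ∀ x ∈ S, eval x.rep (f : PR K m) = 0) : (f : PR K m) ∈ idealOfSet S :=
  Ideal.subset_span ⟨⟨d, (mem_homogeneousSubmodule _ _).mp f.2⟩, hf⟩

lemma schemeSpanSub_idealOfSet_le (d : ℕ) (S : Set (Pm K m)) :
    schemeSpanSub (idealOfSet S) d ≤ dualSpan d S := by
  intro φ hφ
  rw [← Subspace.dualCoannihilator_dualAnnihilator_eq (W := dualSpan d S),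
    Submodule.mem_dualAnnihilator]
  intro f hf
  rw [Submodule.mem_dualCoannihilator] at hf
  refine hφ f (mem_idealOfSet_of_forall_eval_eq_zero f fun x hx => ?_)
  rw [← nu_apply]
  exact hf _ (Submodule.subset_span ⟨x, hx, rfl⟩)

section PointsOffSubspace

variable {d : ℕ} {W : Submodule K (Fin (m+1) → K)} {E : Finset (Pm K m)}

lemma eq_zero_of_sum_smul_nu_mem_dualSpan (hE : E.card ≤ d) (hEW : ∀ a ∈ E, a.rep ∉ W)
    {L : Set (Pm K m)} (hLW : ∀ x ∈ L, x.rep ∈ W)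
    {c : Pm K m → K} (hc : ∑ a ∈ E, c a • nu d a.rep ∈ dualSpan d L) : ∀ a ∈ E, c a = 0 := by
  classical
  intro a ha
  obtain ⟨h, hh_zero, hh_E⟩ := exists_form_interpolating hE hEW (fun b => if b = a then 1 else 0)
  have := apply_eq_zero_of_mem_dualSpan (fun x hx => hh_zero _ (hLW x hx)) hc
  rw [LinearMap.sum_apply, Finset.sum_congr rfl fun b hb => by
    rw [LinearMap.smul_apply, nu_apply, hh_E b hb]] at this
  simpa [ha] using this

lemma linearIndepOn_nu (hE : E.card ≤ d) (hEW : ∀ a ∈ E, a.rep ∉ W) :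
    LinearIndepOn K (fun a : Pm K m => nu d a.rep) (E : Set (Pm K m)) :=
  linearIndepOn_finset_iff.mpr fun c hc =>
    eq_zero_of_sum_smul_nu_mem_dualSpan hE hEW (L := ∅) (by simp) (hc ▸ Submodule.zero_mem _)

lemma finrank_dualSpan_finset (hE : E.card ≤ d) (hEW : ∀ a ∈ E, a.rep ∉ W) :
    Module.finrank K (dualSpan d (E : Set (Pm K m))) = E.card := by
  rw [dualSpan, Set.image_eq_range, finrank_span_eq_card (linearIndepOn_nu hE hEW)]
  simp

lemma disjoint_dualSpan (hE : E.card ≤ d) (hEW : ∀ a ∈ E, a.rep ∉ W)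
    {L : Set (Pm K m)} (hLW : ∀ x ∈ L, x.rep ∈ W) :
    Disjoint (dualSpan d (E : Set (Pm K m))) (dualSpan d L) := by
  rw [Submodule.disjoint_def]
  intro ψ hψE hψL
  obtain ⟨c, rfl⟩ := (Submodule.mem_span_image_finset_iff_exists_fun' K).mp hψE
  have hc := eq_zero_of_sum_smul_nu_mem_dualSpan hE hEW hLW hψL
  exact Finset.sum_eq_zero fun a ha => by rw [hc a ha, zero_smul]

lemma finrank_dualSpan_union (hE : E.card ≤ d) (hEW : ∀ a ∈ E, a.rep ∉ W)
    {L : Set (Pm K m)} (hLW : ∀ x ∈ L, x.rep ∈ W) :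
    Module.finrank K (dualSpan d ((E : Set (Pm K m)) ∪ L)) =
      Module.finrank K (dualSpan d L) + E.card := by
  have h := Submodule.finrank_sup_add_finrank_inf_eq (dualSpan d (E : Set (Pm K m))) (dualSpan d L)
  rw [(disjoint_dualSpan hE hEW hLW).eq_bot, finrank_bot, add_zero,
    finrank_dualSpan_finset hE hEW] at h
  rw [dualSpan_union, h, add_comm]

lemma schemeSpanSub_inf_idealOfSet_inf_dualSpan (hE : E.card ≤ d) (hEW : ∀ a ∈ E, a.rep ∉ W)
    {L : Set (Pm K m)} (hLW : ∀ x ∈ L, x.rep ∈ W)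
    {U : Ideal (PR K m)} (hU : idealOfSet L ≤ U) :
    schemeSpanSub (U ⊓ idealOfSet E) d ⊓ dualSpan d L = schemeSpanSub U d := by
  refine le_antisymm (fun φ ⟨hφE, hφL⟩ f hf => ?_)
    (le_inf (fun φ hφ f hf => hφ f hf.1)
      fun φ hφ => schemeSpanSub_idealOfSet_le d L fun f hf => hφ f (hU hf))
  obtain ⟨h, hh_zero, hh_E⟩ := exists_form_interpolating hE hEW fun b => eval b.rep (f : PR K m)
  have hhL : ∀ x ∈ L, eval x.rep (h : PR K m) = 0 := fun x hx => hh_zero _ (hLW x hx)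
  have hfh : ((f - h : Hd K m d) : PR K m) ∈ U ⊓ idealOfSet E :=
    ⟨sub_mem hf (hU (mem_idealOfSet_of_forall_eval_eq_zero h hhL)),
      mem_idealOfSet_of_forall_eval_eq_zero _ fun b hb => by simp [hh_E b hb]⟩
  rw [← sub_add_cancel f h, map_add, hφE _ hfh, apply_eq_zero_of_mem_dualSpan hhL hφL, add_zero]

end PointsOffSubspace

end

theorem stmt4_general (K : Type) [Field K]
    (m d : ℕ) (L : Set (Pm K m))
    (hL : ∃ W : Submodule K (Fin (m+1) → K), W ≠ ⊤ ∧ L = {a : Pm K m | a.submodule ≤ W})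
    (E : Finset (Pm K m)) (hEL : ∀ a ∈ E, a ∉ L) (hE : E.card ≤ d) :
    (Module.finrank K (dualSpan d ((↑E : Set (Pm K m)) ∪ L)) =
        Module.finrank K (dualSpan d L) + E.card) ∧
    (∀ U : PSub K m, idealOfSet L ≤ U.I →
      {P : PN K m d | inSpanI (U.I ⊓ idealOfSet (↑E : Set (Pm K m))) d P ∧ inSpanSet d L P} =
        {P : PN K m d | inSpanI U.I d P}) ∧
    (∀ O : PN K m d, inSpanSet d (L ∪ (↑E : Set (Pm K m))) O →
      ¬ inSpanSet d (↑E : Set (Pm K m)) O →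
      ∃! Q : PN K m d,
        Q.rep ∈ Submodule.span K (insert O.rep ((fun a => nu d a.rep) '' (↑E : Set (Pm K m)))) ∧
          inSpanSet d L Q) := by
  obtain ⟨W, -, rfl⟩ := hL
  have hLW : ∀ x ∈ {a : Pm K m | a.submodule ≤ W}, x.rep ∈ W :=
    fun x hx => Projectivization.submodule_le_iff_rep_mem.mp hx
  have hEW : ∀ a ∈ E, a.rep ∉ W :=
    fun a ha haW => hEL a ha (Projectivization.submodule_le_iff_rep_mem.mpr haW)
  refine ⟨finrank_dualSpan_union hE hEW hLW, fun U hU => ?_, fun O hO hOE => ?_⟩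
  · ext P
    exact SetLike.ext_iff.mp (schemeSpanSub_inf_idealOfSet_inf_dualSpan hE hEW hLW hU) P.rep
  · rw [Submodule.span_insert]
    refine Projectivization.existsUnique_rep_mem_span_singleton_sup_inf
      (disjoint_dualSpan hE hEW hLW) ?_ hOE
    rwa [inSpanSet, dualSpan_union, sup_comm] at hO

/-- Lemma 3 (`v3`): for a proper linear subspace `L ⊂ ℙ^m`, `d ≥ 2` and a finite set
`E ⊂ ℙ^m ∖ L` with `#E ≤ d`: (i) `dim⟨ν_d(E ∪ L)⟩ = dim⟨ν_d(L)⟩ + #E`; (ii) for every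
closed subscheme `U ⊆ L`, `⟨ν_d(U ∪ E)⟩ ∩ ⟨ν_d(L)⟩ = ⟨ν_d(U)⟩`; (iii) for every
`O ∈ ⟨ν_d(L ∪ E)⟩ ∖ ⟨ν_d(E)⟩`, the set `⟨{O} ∪ ν_d(E)⟩ ∩ ⟨ν_d(L)⟩` is a single point. -/
theorem stmt4 (K : Type) [Field K] [IsAlgClosed K] [CharZero K]
    (m d : ℕ) (hd : 2 ≤ d) (L : Set (Pm K m))
    (hL : ∃ W : Submodule K (Fin (m+1) → K), W ≠ ⊤ ∧ L = {a : Pm K m | a.submodule ≤ W})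
    (E : Finset (Pm K m)) (hEL : ∀ a ∈ E, a ∉ L) (hE : E.card ≤ d) :
    (Module.finrank K (dualSpan d ((↑E : Set (Pm K m)) ∪ L)) =
        Module.finrank K (dualSpan d L) + E.card) ∧
    (∀ U : PSub K m, idealOfSet L ≤ U.I →
      {P : PN K m d | inSpanI (U.I ⊓ idealOfSet (↑E : Set (Pm K m))) d P ∧ inSpanSet d L P} =
        {P : PN K m d | inSpanI U.I d P}) ∧
    (∀ O : PN K m d, inSpanSet d (L ∪ (↑E : Set (Pm K m))) O →
      ¬ inSpanSet d (↑E : Set (Pm K m)) O →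
      ∃! Q : PN K m d,
        Q.rep ∈ Submodule.span K (insert O.rep ((fun a => nu d a.rep) '' (↑E : Set (Pm K m)))) ∧
          inSpanSet d L Q) :=
  stmt4_general K m d L hL E hEL hE
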